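/- arXiv:1508.00730 — 3 statements merged into one kernel-verified Lean document; each statement's English description precedes it below -/
import Mathlib

section
/- Let g ≥ 1, let Λ be a free ℤ-module of rank 2g, let Q : Λ × Λ → ℤ be an alternating bilinear form whose ℝ-bilinear extension to Λ_ℝ := Λ ⊗_ℤ ℝ is nondegenerate, and let G be a finite subgroup of Sp(Λ, Q). Let π : 𝔥 → A_g be the quotient map onto the set of orbits of the conjugation action of Sp(Λ, Q) on the Siegel upper half-space 𝔥. Fix J₀ ∈ 𝔥^G and set D_G := {f ∈ End_ℚ(Λ_ℚ) : J∘f_ℝ = f_ℝ∘J for all J ∈ 𝔥^G}. Let Z(D_G) := π(C), where C is the connected component containing J₀ of the set {J ∈ 𝔥 : J∘f_ℝ = f_ℝ∘J for all f ∈ D_G} (with the subspace topology from End_ℝ(Λ_ℝ)). Then π(𝔥^G) = Z(D_G). -/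
open TensorProduct

section

variable (Λ : Type*) [AddCommGroup Λ] [Module ℤ Λ]

/-- `Λ_ℝ`, the real vector space obtained from the `ℤ`-module `Λ` by extension of scalars
(realised as `ℝ ⊗_ℚ (ℚ ⊗_ℤ Λ)`, so that both `Λ_ℚ := ℚ ⊗_ℤ Λ` and `Λ_ℝ` are available). -/
abbrev LambdaR := ℝ ⊗[ℚ] (ℚ ⊗[ℤ] Λ)

variable (Q : LinearMap.BilinForm ℤ Λ)

/-- The `ℝ`-bilinear extension of `Q : Λ × Λ → ℤ` to `Λ_ℝ`. -/
noncomputable def QR : LinearMap.BilinForm ℝ (LambdaR Λ) :=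
  LinearMap.BilinForm.baseChange ℝ (LinearMap.BilinForm.baseChange ℚ Q)

/-- The `ℝ`-linear extension to `Λ_ℝ` of a `ℤ`-linear map `Λ → Λ`. -/
noncomputable def extZR (M : Λ →ₗ[ℤ] Λ) : Module.End ℝ (LambdaR Λ) :=
  LinearMap.baseChange ℝ (LinearMap.baseChange ℚ M)

/-- The `ℝ`-linear extension to `Λ_ℝ` of a `ℚ`-linear endomorphism of `Λ_ℚ = ℚ ⊗_ℤ Λ`. -/
noncomputable def extQR (f : Module.End ℚ (ℚ ⊗[ℤ] Λ)) : Module.End ℝ (LambdaR Λ) :=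
  LinearMap.baseChange ℝ f

/-- The Siegel upper half-space
`𝔥 = {J ∈ GL(Λ_ℝ) : J² = -1, Q(J·, J·) = Q(·,·), Q(x, Jx) > 0 for x ≠ 0}`,
as a subset of `End_ℝ(Λ_ℝ)`. -/
def Siegel : Set (Module.End ℝ (LambdaR Λ)) :=
  {J | J * J = -1 ∧ (∀ x y, QR Λ Q (J x) (J y) = QR Λ Q x y) ∧
    ∀ x, x ≠ 0 → 0 < QR Λ Q x (J x)}

/-- The fixed locus `𝔥^G = {J ∈ 𝔥 : γ∘J = J∘γ for all γ ∈ G}` of a subgroup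
`G` of `ℤ`-linear automorphisms of `Λ`. -/
def SiegelFixed (G : Subgroup (Λ ≃ₗ[ℤ] Λ)) : Set (Module.End ℝ (LambdaR Λ)) :=
  {J ∈ Siegel Λ Q | ∀ γ ∈ G,
    extZR Λ (γ : Λ ≃ₗ[ℤ] Λ).toLinearMap ∘ₗ J = J ∘ₗ extZR Λ (γ : Λ ≃ₗ[ℤ] Λ).toLinearMap}

/-- `D_G := {f ∈ End_ℚ(Λ_ℚ) : J∘f_ℝ = f_ℝ∘J for all J ∈ 𝔥^G}`. -/
def DG (G : Subgroup (Λ ≃ₗ[ℤ] Λ)) : Set (Module.End ℚ (ℚ ⊗[ℤ] Λ)) :=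
  {f | ∀ J ∈ SiegelFixed Λ Q G, J ∘ₗ extQR Λ f = extQR Λ f ∘ₗ J}

/-- The quotient map `π : 𝔥 → A_g = Sp(Λ,Q)\𝔥` onto the set of orbits of the conjugation
action `M·J := M_ℝ∘J∘M_ℝ⁻¹` of `Sp(Λ, Q)` on `𝔥`, realised as the map sending `J` to its
`Sp(Λ, Q)`-orbit. -/
def piAg (J : Module.End ℝ (LambdaR Λ)) : Set (Module.End ℝ (LambdaR Λ)) :=
  {J' | ∃ M : Λ ≃ₗ[ℤ] Λ, (∀ x y, Q (M x) (M y) = Q x y) ∧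
    J' = extZR Λ M.toLinearMap ∘ₗ J ∘ₗ extZR Λ M.symm.toLinearMap}

namespace PELAux

variable {V : Type*} [AddCommGroup V] [Module ℝ V]

/-- The model "fixed locus": complex structures compatible with `W`, positive,
commuting with everything in `T`. -/
def goodSet (W : LinearMap.BilinForm ℝ V) (T : Set (Module.End ℝ V)) :
    Set (Module.End ℝ V) :=
  {K | (K * K = -1 ∧ (∀ x y, W (K x) (K y) = W x y) ∧ ∀ x, x ≠ 0 → 0 < W x (K x)) ∧
    ∀ γ ∈ T, γ * K = K * γ}

noncomputable def pathA (J₀ J : Module.End ℝ V) (t : ℝ) : Module.End ℝ V :=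
  (1 - t) • J₀ + (1 + t) • J

noncomputable def pathB (J₀ J : Module.End ℝ V) (t : ℝ) : Module.End ℝ V :=
  (1 + t) • J₀ + (1 - t) • J

theorem key_mem (W : LinearMap.BilinForm ℝ V) (T : Set (Module.End ℝ V))
    (J₀ J : Module.End ℝ V) (hJ₀ : J₀ ∈ goodSet W T) (hJ : J ∈ goodSet W T)
    (t : ℝ) (ht0 : 0 ≤ t) (ht1 : t ≤ 1) (Bi : Module.End ℝ V)
    (hBi : pathB J₀ J t * Bi = 1) (hiB : Bi * pathB J₀ J t = 1) :
    (pathA J₀ J t * Bi * J₀) ∈ goodSet W T := by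
  obtain ⟨⟨h0sq, h0c, h0p⟩, h0γ⟩ := hJ₀
  obtain ⟨⟨hsq, hc, hp⟩, hγ⟩ := hJ
  have h00 : ∀ x, J₀ (J₀ x) = -x := fun x => by
    simpa [Module.End.mul_apply] using LinearMap.ext_iff.mp h0sq x
  have hJJ : ∀ x, J (J x) = -x := fun x => by
    simpa [Module.End.mul_apply] using LinearMap.ext_iff.mp hsq x
  have fA : ∀ x, pathA J₀ J t x = (1 - t) • J₀ x + (1 + t) • J x := fun x => by
    simp [pathA]
  have fB : ∀ x, pathB J₀ J t x = (1 + t) • J₀ x + (1 - t) • J x := fun x => by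
    simp [pathB]
  have fBi : ∀ x, pathB J₀ J t (Bi x) = x := fun x => by
    simpa [Module.End.mul_apply] using LinearMap.ext_iff.mp hBi x
  have fiB : ∀ x, Bi (pathB J₀ J t x) = x := fun x => by
    simpa [Module.End.mul_apply] using LinearMap.ext_iff.mp hiB x
  have fI1 : ∀ x, J₀ (pathA J₀ J t x) = pathB J₀ J t (J x) := fun x => by
    rw [fA, fB (J x), map_add, map_smul, map_smul, h00, hJJ]
    module
  have fI2 : ∀ x, pathA J₀ J t (J x) = J₀ (pathB J₀ J t x) := fun x => by
    rw [fA, fB, map_add, map_smul, map_smul, hJJ, h00]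
    module
  have fK : ∀ x, (pathA J₀ J t * Bi * J₀) x = pathA J₀ J t (Bi (J₀ x)) := fun x => by
    simp [Module.End.mul_apply]
  have h0inj : ∀ x, J₀ x = 0 → x = 0 := fun x hx => by
    have h2 := h00 x; rw [hx, map_zero] at h2; exact neg_eq_zero.mp h2.symm
  have hJinj : ∀ x, J x = 0 → x = 0 := fun x hx => by
    have h2 := hJJ x; rw [hx, map_zero] at h2; exact neg_eq_zero.mp h2.symm
  have hskewJ : ∀ a, W (J a) a = - W a (J a) := fun a => by
    have h := hc a (-(J a))
    simp only [map_neg, hJJ, neg_neg, LinearMap.neg_apply] at h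
    exact h
  have hskewJ0 : ∀ a, W (J₀ a) a = - W a (J₀ a) := fun a => by
    have h := h0c a (-(J₀ a))
    simp only [map_neg, h00, neg_neg, LinearMap.neg_apply] at h
    exact h
  -- the three Siegel conditions
  have hKK : pathA J₀ J t * Bi * J₀ * (pathA J₀ J t * Bi * J₀) = -1 := by
    refine LinearMap.ext fun x => ?_
    have : (pathA J₀ J t * Bi * J₀) ((pathA J₀ J t * Bi * J₀) x) = -x := by
      rw [fK, fK, fI1, fiB, fI2, fBi, h00]
    simpa [Module.End.mul_apply] using this
  have hABcomp : ∀ u v, W (pathA J₀ J t u) (pathA J₀ J t v)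
      = W (pathB J₀ J t u) (pathB J₀ J t v) := fun u v => by
    rw [fA, fA, fB, fB]
    simp only [map_add, map_smul, LinearMap.add_apply, LinearMap.smul_apply, smul_eq_mul]
    rw [h0c, hc]
    ring
  have hKcomp : ∀ x y, W ((pathA J₀ J t * Bi * J₀) x) ((pathA J₀ J t * Bi * J₀) y)
      = W x y := fun x y => by
    calc W ((pathA J₀ J t * Bi * J₀) x) ((pathA J₀ J t * Bi * J₀) y)
        = W (pathA J₀ J t (Bi (J₀ x))) (pathA J₀ J t (Bi (J₀ y))) := by rw [fK, fK]
      _ = W (pathB J₀ J t (Bi (J₀ x))) (pathB J₀ J t (Bi (J₀ y))) := hABcomp _ _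
      _ = W (J₀ x) (J₀ y) := by rw [fBi, fBi]
      _ = W x y := h0c _ _
  have hposA : ∀ u, u ≠ 0 → 0 < W (-(J₀ (pathB J₀ J t u))) (pathA J₀ J t u) := by
    intro u hu0
    have P1 := h0p u hu0
    have P2 := hp u hu0
    have P3 := h0p (J u) (fun h => hu0 (hJinj u h))
    have expand : W (-(J₀ (pathB J₀ J t u))) (pathA J₀ J t u)
        = (1-t^2) * W u (J₀ u) + ((1+t)^2 + (1-t)^2) * W u (J u)
          + (1-t^2) * W (J u) (J₀ (J u)) := by
      rw [fA, fB]
      simp only [map_add, map_smul, map_neg, LinearMap.add_apply, LinearMap.smul_apply,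
        LinearMap.neg_apply, smul_eq_mul, mul_neg, neg_neg, neg_add_rev, h00]
      rw [h0c (J u) u, hskewJ u, hskewJ0 (J u)]
      ring
    rw [expand]
    have e1 : (0:ℝ) < 1 + t := by linarith
    have e2 : (0:ℝ) ≤ 1 - t := by linarith
    nlinarith [mul_nonneg (mul_nonneg e2 e1.le) P1.le, mul_pos (mul_pos e1 e1) P2,
      mul_nonneg (mul_nonneg e2 e2) P2.le, mul_nonneg (mul_nonneg e2 e1.le) P3.le]
  have hKpos : ∀ x, x ≠ 0 → 0 < W x ((pathA J₀ J t * Bi * J₀) x) := by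
    intro x hx
    have hBu : pathB J₀ J t (Bi (J₀ x)) = J₀ x := fBi _
    have hu0 : Bi (J₀ x) ≠ 0 := by
      intro h
      exact hx (h0inj x (by rw [← hBu, h, map_zero]))
    have hxu : x = -(J₀ (pathB J₀ J t (Bi (J₀ x)))) := by
      rw [hBu, h00, neg_neg]
    have := hposA (Bi (J₀ x)) hu0
    rw [fK]
    rw [← hxu] at this
    exact this
  -- commutation
  have hKγ : ∀ γ ∈ T, γ * (pathA J₀ J t * Bi * J₀) = (pathA J₀ J t * Bi * J₀) * γ := by
    intro γ hγT
    have c0 : Commute γ J₀ := h0γ γ hγT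
    have c1 : Commute γ J := hγ γ hγT
    have cA : Commute γ (pathA J₀ J t) := (c0.smul_right (1 - t)).add_right (c1.smul_right (1 + t))
    have cB : Commute γ (pathB J₀ J t) := (c0.smul_right (1 + t)).add_right (c1.smul_right (1 - t))
    let u : (Module.End ℝ V)ˣ := ⟨pathB J₀ J t, Bi, hBi, hiB⟩
    have cBi : Commute γ Bi := Commute.units_inv_right (u := u) cB
    exact (cA.mul_right cBi).mul_right c0
  exact ⟨⟨hKK, hKcomp, hKpos⟩, hKγ⟩

theorem goodSet_isPathConnected [FiniteDimensional ℝ V]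
    [TopologicalSpace (Module.End ℝ V)] [IsModuleTopology ℝ (Module.End ℝ V)]
    (W : LinearMap.BilinForm ℝ V) (T : Set (Module.End ℝ V))
    (J₀ : Module.End ℝ V) (hJ₀ : J₀ ∈ goodSet W T) :
    IsPathConnected (goodSet W T) := by
  classical
  refine ⟨J₀, hJ₀, ?_⟩
  intro J hJ
  obtain ⟨⟨h0sq, h0c, h0p⟩, -⟩ := id hJ₀
  obtain ⟨⟨hsq, hc, hp⟩, -⟩ := id hJ
  have hBbij : ∀ t : ℝ, 0 ≤ t → t ≤ 1 → Function.Bijective (pathB J₀ J t) := by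
    intro t ht0 ht1
    have hinj : Function.Injective (pathB J₀ J t) := by
      intro x y hxy
      by_contra hne
      have hxy0 : x - y ≠ 0 := sub_ne_zero.mpr hne
      have hsub : pathB J₀ J t (x - y) = 0 := by rw [map_sub, hxy, sub_self]
      have hpos : 0 < W (x - y) (pathB J₀ J t (x - y)) := by
        have p1 := h0p _ hxy0
        have p2 := hp _ hxy0
        simp only [pathB, LinearMap.add_apply, LinearMap.smul_apply, map_add, map_smul,
          smul_eq_mul]
        nlinarith
      rw [hsub] at hpos
      simp at hpos
    exact ⟨hinj, LinearMap.injective_iff_surjective.mp hinj⟩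
  let E : unitInterval → (V ≃ₗ[ℝ] V) := fun t =>
    LinearEquiv.ofBijective (pathB J₀ J ↑t) (hBbij ↑t t.2.1 t.2.2)
  let Bi : unitInterval → Module.End ℝ V := fun t => (E t).symm.toLinearMap
  have hBi : ∀ t : unitInterval, pathB J₀ J ↑t * Bi t = 1 := fun t =>
    LinearMap.ext fun x => (E t).apply_symm_apply x
  have hiB : ∀ t, Bi t * pathB J₀ J ↑t = 1 := fun t =>
    LinearMap.ext fun x => (E t).symm_apply_apply x
  let c : unitInterval → Module.End ℝ V := fun t => pathA J₀ J ↑t * Bi t * J₀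
  have hmem : ∀ t, c t ∈ goodSet W T := fun t =>
    key_mem W T J₀ J hJ₀ hJ ↑t t.2.1 t.2.2 (Bi t) (hBi t) (hiB t)
  have hcoe0 : ((0 : unitInterval) : ℝ) = 0 := rfl
  have hcoe1 : ((1 : unitInterval) : ℝ) = 1 := rfl
  have hc0 : c 0 = J₀ := by
    show pathA J₀ J ↑(0 : unitInterval) * Bi 0 * J₀ = J₀
    rw [show pathA J₀ J ↑(0 : unitInterval) = pathB J₀ J ↑(0 : unitInterval) from by
      rw [hcoe0]; simp [pathA, pathB]]
    rw [hBi 0, one_mul]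
  have hB1 : pathB J₀ J ↑(1 : unitInterval) = (2 : ℝ) • J₀ := by
    rw [hcoe1]; norm_num [pathB]
  have hA1 : pathA J₀ J ↑(1 : unitInterval) = (2 : ℝ) • J := by
    rw [hcoe1]; norm_num [pathA]
  have hBi1 : Bi 1 = (-(2⁻¹ : ℝ)) • J₀ := by
    have hX : ((-(2⁻¹ : ℝ)) • J₀) * pathB J₀ J ↑(1 : unitInterval) = 1 := by
      rw [hB1, smul_mul_smul_comm, h0sq]
      norm_num
    calc Bi 1 = 1 * Bi 1 := (one_mul _).symm
      _ = ((-(2⁻¹ : ℝ)) • J₀ * pathB J₀ J ↑(1 : unitInterval)) * Bi 1 := by rw [hX]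
      _ = (-(2⁻¹ : ℝ)) • J₀ * (pathB J₀ J ↑(1 : unitInterval) * Bi 1) := mul_assoc _ _ _
      _ = (-(2⁻¹ : ℝ)) • J₀ := by rw [hBi 1, mul_one]
  have hc1 : c 1 = J := by
    show pathA J₀ J ↑(1 : unitInterval) * Bi 1 * J₀ = J
    rw [hA1, hBi1, smul_mul_smul_comm, smul_mul_assoc, mul_assoc, h0sq]
    norm_num
  -- continuity via matrices
  let b := Module.finBasis ℝ V
  let φ := LinearMap.toMatrixAlgEquiv b
  have hdet : ∀ t : unitInterval, (φ (pathB J₀ J ↑t)).det ≠ 0 := by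
    intro t
    have hu : IsUnit (pathB J₀ J ↑t) := ⟨⟨pathB J₀ J ↑t, Bi t, hBi t, hiB t⟩, rfl⟩
    exact ((Matrix.isUnit_iff_isUnit_det _).mp (hu.map φ)).ne_zero
  let minv : unitInterval → Matrix (Fin (Module.finrank ℝ V)) (Fin (Module.finrank ℝ V)) ℝ :=
    fun t => (φ (pathB J₀ J ↑t)).det⁻¹ • (φ (pathB J₀ J ↑t)).adjugate
  have hminv : ∀ t, φ (Bi t) = minv t := by
    intro t
    have h2 : φ (pathB J₀ J ↑t) * minv t = 1 := by
      show φ (pathB J₀ J ↑t) * ((φ (pathB J₀ J ↑t)).det⁻¹ • (φ (pathB J₀ J ↑t)).adjugate) = 1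
      rw [mul_smul_comm, Matrix.mul_adjugate, smul_smul, inv_mul_cancel₀ (hdet t), one_smul]
    calc φ (Bi t) = φ (Bi t) * (φ (pathB J₀ J ↑t) * minv t) := by rw [h2, mul_one]
      _ = (φ (Bi t) * φ (pathB J₀ J ↑t)) * minv t := (mul_assoc _ _ _).symm
      _ = φ (Bi t * pathB J₀ J ↑t) * minv t := by rw [map_mul]
      _ = minv t := by rw [hiB t, map_one, one_mul]
  let mfun : unitInterval → Matrix (Fin (Module.finrank ℝ V)) (Fin (Module.finrank ℝ V)) ℝ :=
    fun t => φ (pathA J₀ J ↑t) * minv t * φ J₀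
  have hφc : ∀ t, φ (c t) = mfun t := fun t => by
    show φ (pathA J₀ J ↑t * Bi t * J₀) = _
    rw [map_mul, map_mul, hminv t]
  haveI : ContinuousAdd (Module.End ℝ V) := IsModuleTopology.toContinuousAdd ℝ _
  have hcB : Continuous fun t : unitInterval => φ (pathB J₀ J ↑t) := by
    have heq : (fun t : unitInterval => φ (pathB J₀ J ↑t))
        = fun t : unitInterval => (1 + (t : ℝ)) • φ J₀ + (1 - (t : ℝ)) • φ J := by
      funext t; simp [pathB, map_add, map_smul]
    rw [heq]
    exact ((continuous_const.add continuous_subtype_val).smul continuous_const).add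
      ((continuous_const.sub continuous_subtype_val).smul continuous_const)
  have hcA : Continuous fun t : unitInterval => φ (pathA J₀ J ↑t) := by
    have heq : (fun t : unitInterval => φ (pathA J₀ J ↑t))
        = fun t : unitInterval => (1 - (t : ℝ)) • φ J₀ + (1 + (t : ℝ)) • φ J := by
      funext t; simp [pathA, map_add, map_smul]
    rw [heq]
    exact ((continuous_const.sub continuous_subtype_val).smul continuous_const).add
      ((continuous_const.add continuous_subtype_val).smul continuous_const)
  have hcminv : Continuous minv := (hcB.matrix_det.inv₀ hdet).smul hcB.matrix_adjugate
  have hcm : Continuous mfun := (hcA.matrix_mul hcminv).matrix_mul continuous_const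
  let ψ : ((Fin (Module.finrank ℝ V) × Fin (Module.finrank ℝ V)) → ℝ) →ₗ[ℝ] Module.End ℝ V :=
    { toFun := fun f => φ.symm (Matrix.of fun i j => f (i, j))
      map_add' := fun f g => by
        show φ.symm (Matrix.of fun i j => (f + g) (i, j))
            = φ.symm (Matrix.of fun i j => f (i, j)) + φ.symm (Matrix.of fun i j => g (i, j))
        rw [show (Matrix.of fun i j => (f + g) (i, j))
            = (Matrix.of fun i j => f (i, j)) + (Matrix.of fun i j => g (i, j)) from rfl,
          map_add]
      map_smul' := fun r f => by
        show φ.symm (Matrix.of fun i j => (r • f) (i, j))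
            = (RingHom.id ℝ) r • φ.symm (Matrix.of fun i j => f (i, j))
        rw [show (Matrix.of fun i j => (r • f) (i, j))
            = r • (Matrix.of fun i j => f (i, j)) from rfl, map_smul, RingHom.id_apply] }
  have hψ : Continuous ψ := LinearMap.continuous_on_pi ψ
  have hceq : c = fun t => ψ fun p => mfun t p.1 p.2 := by
    funext t
    have h1 : ψ (fun p => mfun t p.1 p.2) = φ.symm (mfun t) := rfl
    rw [h1, ← hφc t, AlgEquiv.symm_apply_apply]
  have hcont : Continuous c := by
    rw [hceq]
    exact hψ.comp (continuous_pi fun p => hcm.matrix_elem p.1 p.2)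
  exact ⟨⟨⟨c, hcont⟩, hc0, hc1⟩, hmem⟩

end PELAux

/-- Let `g ≥ 1`, `Λ` a free `ℤ`-module of rank `2g`, `Q` an alternating
bilinear form on `Λ` with nondegenerate `ℝ`-bilinear extension, `G` a finite subgroup of
`Sp(Λ, Q)`, and `J₀ ∈ 𝔥^G`.  Let `Z(D_G) := π(C)` where `C` is the connected component
containing `J₀` of `{J ∈ 𝔥 : J∘f_ℝ = f_ℝ∘J for all f ∈ D_G}`.  Then `π(𝔥^G) = Z(D_G)`. -/
theorem image_fixed_locus_eq_PEL
    (g : ℕ) (hg : 1 ≤ g) [Module.Free ℤ Λ]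
    (hrank : Module.finrank ℤ Λ = 2 * g)
    (hQalt : Q.IsAlt) (hQnd : (QR Λ Q).Nondegenerate)
    (G : Subgroup (Λ ≃ₗ[ℤ] Λ)) (hGfin : Finite G)
    (hG : ∀ γ ∈ G, ∀ x y : Λ, Q (γ x) (γ y) = Q x y)
    (J₀ : Module.End ℝ (LambdaR Λ)) (hJ₀ : J₀ ∈ SiegelFixed Λ Q G) :
    letI : TopologicalSpace (Module.End ℝ (LambdaR Λ)) :=
      moduleTopology ℝ (Module.End ℝ (LambdaR Λ))
    piAg Λ Q '' SiegelFixed Λ Q G =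
      piAg Λ Q '' connectedComponentIn
        {J ∈ Siegel Λ Q | ∀ f ∈ DG Λ Q G, J ∘ₗ extQR Λ f = extQR Λ f ∘ₗ J} J₀ := by
  letI : TopologicalSpace (Module.End ℝ (LambdaR Λ)) :=
    moduleTopology ℝ (Module.End ℝ (LambdaR Λ))
  haveI hfinZ : Module.Finite ℤ Λ := by
    have hb := Module.Free.chooseBasis ℤ Λ
    have hlt : Module.rank ℤ Λ < Cardinal.aleph0 := by
      by_contra h
      push_neg at h
      have hzero : Module.finrank ℤ Λ = 0 := by
        have : Module.finrank ℤ Λ = Cardinal.toNat (Module.rank ℤ Λ) := rfl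
        rw [this, Cardinal.toNat_apply_of_aleph0_le h]
      omega
    haveI : Finite (Module.Free.ChooseBasisIndex ℤ Λ) := by
      rw [Module.Free.rank_eq_card_chooseBasisIndex] at hlt
      exact Cardinal.mk_lt_aleph0_iff.mp hlt
    exact Module.Finite.of_basis hb
  haveI : FiniteDimensional ℝ (LambdaR Λ) := inferInstance
  haveI hMT : IsModuleTopology ℝ (Module.End ℝ (LambdaR Λ)) := ⟨rfl⟩
  have hSeq : {J ∈ Siegel Λ Q | ∀ f ∈ DG Λ Q G, J ∘ₗ extQR Λ f = extQR Λ f ∘ₗ J}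
      = SiegelFixed Λ Q G := by
    ext K
    constructor
    · rintro ⟨hK, hKf⟩
      refine ⟨hK, fun γ hγ => ?_⟩
      have hmem : (LinearMap.baseChange ℚ (γ : Λ ≃ₗ[ℤ] Λ).toLinearMap) ∈ DG Λ Q G :=
        fun J' hJ' => (hJ'.2 γ hγ).symm
      exact (hKf _ hmem).symm
    · rintro ⟨hK, hKγ⟩
      exact ⟨hK, fun f hf => hf K ⟨hK, hKγ⟩⟩
  rw [hSeq]
  have hSF : SiegelFixed Λ Q G
      = PELAux.goodSet (QR Λ Q)
          {h | ∃ γ ∈ G, h = extZR Λ (γ : Λ ≃ₗ[ℤ] Λ).toLinearMap} := by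
    ext K
    constructor
    · rintro ⟨hK, hKγ⟩
      exact ⟨hK, by rintro γR ⟨γ, hγ, rfl⟩; exact hKγ γ hγ⟩
    · rintro ⟨hK, hKγ⟩
      exact ⟨hK, fun γ hγ => hKγ _ ⟨γ, hγ, rfl⟩⟩
  have hpc : IsPathConnected (SiegelFixed Λ Q G) := by
    rw [hSF]
    exact PELAux.goodSet_isPathConnected _ _ J₀ (hSF ▸ hJ₀)
  rw [hpc.isConnected.isPreconnected.connectedComponentIn hJ₀]

end
end

section
/- Let G = Q₈ be the quaternion group of order 8, and let ρ : G → GL(V) be a representation on a 3-dimensional complex vector space V whose character χ satisfies χ(x) = 1 for every element x of order 4 and χ(x) = -1 for the unique element of order 2. Then the dimension of the subspace of G-invariants of the symmetric square S²V (with the induced G-action S²ρ) equals 1. -/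
/-!
The dimension of the invariants is the average of the character of `S²ρ`, and
`χ_{S²ρ}(g) = (χ(g)² + χ(g²)) / 2`: the quotient `S²V` is identified with the image of the
symmetrizer `(1 + τ) / 2`, `τ` the flip of `V ⊗ V`, and `tr (τ ∘ (f ⊗ f)) = tr (f²)`.
In `Q₈` the six elements of order 4 all square to the central involution, so `χ_{S²ρ}` is
`6` at `1`, `2` at the involution and `0` elsewhere, with average `8 / 8 = 1`.
-/

open TensorProduct LinearMap

theorem LinearMap.trace_map_comp_comm {R M : Type*} [CommRing R] [AddCommGroup M] [Module R M]
    [Module.Free R M] [Module.Finite R M] (f g : M →ₗ[R] M) :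
    trace R (M ⊗[R] M) (map f g ∘ₗ (TensorProduct.comm R M M).toLinearMap) =
      trace R M (f ∘ₗ g) := by
  classical
  let b := Module.Free.chooseBasis R M
  rw [trace_eq_matrix_trace R (b.tensorProduct b), trace_eq_matrix_trace R b, toMatrix_comp b b b,
    Matrix.trace, Matrix.trace, Fintype.sum_prod_type]
  simp [Matrix.mul_apply, toMatrix_apply, Module.Basis.tensorProduct_apply,
    Module.Basis.tensorProduct_repr_tmul_apply, mul_comm]

theorem LinearMap.trace_mapQ_ker_of_isIdempotentElem {K M : Type*} [Field K] [AddCommGroup M]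
    [Module K M] [FiniteDimensional K M] {P F : Module.End K M} (hP : IsIdempotentElem P)
    (hPF : Commute P F) {N : Submodule K M} (hN : ker P = N) (hF : N ≤ N.comap F) :
    trace K (M ⧸ N) (N.mapQ N F hF) = trace K M (F * P) := by
  subst hN
  have hrange : ∀ x, (F * P) x ∈ range P := fun x =>
    ⟨F x, by simpa using congr($hPF x)⟩
  rw [← trace_restrict_eq_of_forall_mem _ _ hrange, ← trace_conj' _ P.quotKerEquivRange]
  congr 1
  ext ⟨_, x, rfl⟩
  have hPx : P.quotKerEquivRange.symm ⟨P x, x, rfl⟩ = (ker P).mkQ x :=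
    quotKerEquivRange_symm_apply_image P x _
  have hPFP : F * P * P = P * F := by rw [mul_assoc, hP.eq, hPF.eq]
  simpa [LinearEquiv.conj_apply, hPx] using congr($hPFP x).symm

namespace TensorProduct

variable {K M : Type*} [Field K] [AddCommGroup M] [Module K M]

section
variable (K M)

abbrev symSqRel : Submodule K (M ⊗[K] M) :=
  Submodule.span K {x | ∃ v w : M, x = v ⊗ₜ[K] w - w ⊗ₜ[K] v}

theorem symSqRel_eq_range :
    symSqRel K M = range (1 - (TensorProduct.comm K M M).toLinearMap) := by
  rw [symSqRel, range_eq_map, ← span_tmul_eq_top, Submodule.map_span]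
  congr 1
  ext x
  simp [eq_comm]

theorem comm_mul_comm :
    (TensorProduct.comm K M M).toLinearMap * (TensorProduct.comm K M M).toLinearMap = 1 :=
  TensorProduct.ext' fun _ _ => rfl

end

theorem commute_comm_map (f : Module.End K M) :
    Commute (TensorProduct.comm K M M).toLinearMap (map f f) :=
  TensorProduct.ext' fun _ _ => rfl

theorem symSqRel_le_comap_map (f : Module.End K M) :
    symSqRel K M ≤ (symSqRel K M).comap (map f f) :=
  Submodule.span_le.mpr fun _ ⟨v, w, hx⟩ => Submodule.subset_span ⟨f v, f w, by simp [hx]⟩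

def symSqMap (f : Module.End K M) : Module.End K (M ⊗[K] M ⧸ symSqRel K M) :=
  (symSqRel K M).mapQ _ (map f f) (symSqRel_le_comap_map f)

theorem eq_symSqMap {f : Module.End K M} {F : Module.End K (M ⊗[K] M ⧸ symSqRel K M)}
    (hF : ∀ v w, F (Submodule.Quotient.mk (v ⊗ₜ w)) = Submodule.Quotient.mk (f v ⊗ₜ f w)) :
    F = symSqMap f :=
  Submodule.linearMap_qext _ (TensorProduct.ext' hF)

variable [Invertible (2 : K)]

section
variable (K M)

def symmetrizer : Module.End K (M ⊗[K] M) :=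
  (⅟2 : K) • (1 + (TensorProduct.comm K M M).toLinearMap)

theorem isIdempotentElem_symmetrizer : IsIdempotentElem (symmetrizer K M) := by
  simp only [IsIdempotentElem, symmetrizer, smul_mul_smul_comm, mul_add, add_mul, one_mul,
    mul_one, comm_mul_comm]
  rw [add_comm _ 1, ← two_smul K, smul_smul, mul_assoc, invOf_mul_self, mul_one]

theorem ker_symmetrizer : ker (symmetrizer K M) = symSqRel K M := by
  rw [(isIdempotentElem_symmetrizer K M).ker_eq_range_one_sub, symSqRel_eq_range]
  have h : 1 - symmetrizer K M = (⅟2 : K) • (1 - (TensorProduct.comm K M M).toLinearMap) := by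
    rw [symmetrizer]
    match_scalars
    · linear_combination -invOf_two_add_invOf_two (R := K)
    · ring
  rw [h, range_smul _ _ (Invertible.ne_zero (⅟(2 : K)))]

end

variable [FiniteDimensional K M]

theorem trace_map_mul_symmetrizer (f : Module.End K M) :
    trace K _ (map f f * symmetrizer K M) =
      ⅟2 * (trace K M f * trace K M f + trace K M (f * f)) := by
  rw [symmetrizer, mul_smul_comm, mul_add, mul_one, map_smul, map_add, trace_tensorProduct',
    Module.End.mul_eq_comp, trace_map_comp_comm, smul_eq_mul, Module.End.mul_eq_comp]

theorem trace_symSqMap (f : Module.End K M) :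
    trace K _ (symSqMap f) = ⅟2 * (trace K M f * trace K M f + trace K M (f * f)) := by
  rw [symSqMap, trace_mapQ_ker_of_isIdempotentElem (isIdempotentElem_symmetrizer K M)
    (((Commute.one_left _).add_left (commute_comm_map f)).smul_left _) (ker_symmetrizer K M),
    trace_map_mul_symmetrizer]

end TensorProduct

namespace QuaternionGroup
variable {n : ℕ} [NeZero n]

theorem orderOf_a_n : orderOf (a n : QuaternionGroup n) = 2 := by
  rw [orderOf_a, ZMod.val_natCast, Nat.mod_eq_of_lt (by have := NeZero.pos n; omega),
    Nat.gcd_mul_left_left, Nat.mul_div_cancel _ (NeZero.pos n)]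

theorem orderOf_eq_four_of_mul_self_eq_a_n {g : QuaternionGroup n} (hg : g * g = a n) :
    orderOf g = 4 := by
  have hsq : g ^ 2 = a n := by rw [sq, hg]
  refine orderOf_eq_prime_pow (p := 2) (n := 1) ?_ ?_
  · rw [pow_one, hsq]
    intro h
    simpa [h] using (orderOf_a_n (n := n))
  · rw [show 2 ^ (1 + 1) = 2 * 2 from rfl, pow_mul, hsq]
    exact orderOf_dvd_iff_pow_eq_one.mp orderOf_a_n.dvd

theorem eq_one_or_eq_a_two_or_mul_self_eq_a_two (g : QuaternionGroup 2) :
    g = 1 ∨ g = a 2 ∨ g * g = a 2 := by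
  revert g; decide

end QuaternionGroup

/-- Let `G = Q₈` be the quaternion group of order 8, and let `ρ : G → GL(V)`
be a representation on a 3-dimensional complex vector space `V` whose character `χ` satisfies
`χ(x) = 1` for every element `x` of order 4 and `χ(x) = -1` for the unique element of order 2.
Then the dimension of the subspace of `G`-invariants of the symmetric square `S²V`
(the quotient of `V ⊗ V` by the span of the elements `v ⊗ w - w ⊗ v`, with the induced
`G`-action `S²ρ`) equals `1`.

Here `Q₈` is realised as `QuaternionGroup 2`, the generalised quaternion group of order 8. -/
theorem invariants_sym_square_family5
    (V : Type*) [AddCommGroup V] [Module ℂ V] [FiniteDimensional ℂ V]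
    (hdim : Module.finrank ℂ V = 3)
    (ρ : Representation ℂ (QuaternionGroup 2) V)
    (hχ₄ : ∀ x : QuaternionGroup 2, orderOf x = 4 → LinearMap.trace ℂ V (ρ x) = 1)
    (hχ₂ : ∀ x : QuaternionGroup 2, orderOf x = 2 → LinearMap.trace ℂ V (ρ x) = -1)
    -- `S²ρ`: the induced representation on the symmetric square `S²V`
    (σ : Representation ℂ (QuaternionGroup 2)
      ((V ⊗[ℂ] V) ⧸ Submodule.span ℂ {x : V ⊗[ℂ] V | ∃ v w : V, x = v ⊗ₜ[ℂ] w - w ⊗ₜ[ℂ] v}))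
    (hσ : ∀ (x : QuaternionGroup 2) (v w : V),
      σ x (Submodule.Quotient.mk (v ⊗ₜ[ℂ] w)) = Submodule.Quotient.mk (ρ x v ⊗ₜ[ℂ] ρ x w)) :
    Module.finrank ℂ σ.invariants = 1 := by
  have hσχ (g : QuaternionGroup 2) : σ.character g =
      ⅟2 * (trace ℂ V (ρ g) * trace ℂ V (ρ g) + trace ℂ V (ρ (g * g))) := by
    rw [Representation.character, eq_symSqMap (hσ g), trace_symSqMap, map_mul ρ]
  have hχ₁ : trace ℂ V (ρ 1) = 3 := by rw [map_one, trace_one, hdim]; norm_num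
  have hχa : trace ℂ V (ρ (QuaternionGroup.a 2)) = -1 := hχ₂ _ QuaternionGroup.orderOf_a_n
  have hsum : ∑ g, σ.character g = 8 := by
    have ha : QuaternionGroup.a 2 * QuaternionGroup.a 2 = (1 : QuaternionGroup 2) := by decide
    rw [Fintype.sum_eq_add 1 (QuaternionGroup.a 2) (by decide), hσχ, hσχ, one_mul, ha, hχ₁, hχa]
    · norm_num
    rintro g ⟨hg₁, hg₂⟩
    obtain hg : g * g = QuaternionGroup.a 2 :=
      ((QuaternionGroup.eq_one_or_eq_a_two_or_mul_self_eq_a_two g).resolve_left hg₁).resolve_left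
        hg₂
    rw [hσχ, hg, hχ₄ g (QuaternionGroup.orderOf_eq_four_of_mul_self_eq_a_n hg), hχa]
    norm_num
  have hcard : Nat.card (QuaternionGroup 2) = 8 := by
    rw [Nat.card_eq_fintype_card, QuaternionGroup.card]
  have : Invertible (Nat.card (QuaternionGroup 2) : ℂ) := invertibleOfNonzero (by simp)
  have h := σ.card_inv_mul_sum_char_eq_finrank
  rw [hsum, hcard, Nat.cast_ofNat, inv_mul_cancel₀ (by norm_num)] at h
  exact_mod_cast h.symm
end

section
/- There exists an injective group homomorphism from the quaternion group Q₈ = ⟨g₁, g₂, g₃ : g₁² = g₂² = g₃, g₃² = 1, g₁⁻¹g₂g₁ = g₂g₃⟩ into the semidirect product G̃ = (ℤ/4ℤ × ℤ/2ℤ) ⋊ ℤ/2ℤ = ⟨y₁, y₂, y₃ : y₁² = y₂² = y₃⁴ = 1, y₂y₃ = y₃y₂, y₁⁻¹y₂y₁ = y₂y₃², y₁⁻¹y₃y₁ = y₃⟩, given on generators by g₁ ↦ y₂y₃, g₂ ↦ y₂y₁, g₃ ↦ y₃². -/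
/-- Generators `g₁, g₂, g₃` of the quaternion group `Q₈`. -/
inductive QuatGen | g1 | g2 | g3

/-- The relations of the presentation
`Q₈ = ⟨g₁, g₂, g₃ : g₁² = g₂² = g₃, g₃² = 1, g₁⁻¹g₂g₁ = g₂g₃⟩`. -/
def quatRels : Set (FreeGroup QuatGen) :=
  { FreeGroup.of QuatGen.g1 ^ 2 * (FreeGroup.of QuatGen.g3)⁻¹,
    FreeGroup.of QuatGen.g2 ^ 2 * (FreeGroup.of QuatGen.g3)⁻¹,
    FreeGroup.of QuatGen.g3 ^ 2,
    (FreeGroup.of QuatGen.g1)⁻¹ * FreeGroup.of QuatGen.g2 * FreeGroup.of QuatGen.g1 *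
      (FreeGroup.of QuatGen.g2 * FreeGroup.of QuatGen.g3)⁻¹ }

/-- The quaternion group `Q₈ = ⟨g₁, g₂, g₃ : g₁² = g₂² = g₃, g₃² = 1, g₁⁻¹g₂g₁ = g₂g₃⟩`. -/
def Q8 : Type := PresentedGroup quatRels

noncomputable instance : Group Q8 := by unfold Q8; infer_instance

/-- Generators `y₁, y₂, y₃` of `G̃ = (ℤ/4ℤ × ℤ/2ℤ) ⋊ ℤ/2ℤ`. -/
inductive TildeGen | y1 | y2 | y3

/-- The relations of the presentation
`G̃ = (ℤ/4ℤ × ℤ/2ℤ) ⋊ ℤ/2ℤ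
   = ⟨y₁, y₂, y₃ : y₁² = y₂² = y₃⁴ = 1, y₂y₃ = y₃y₂, y₁⁻¹y₂y₁ = y₂y₃², y₁⁻¹y₃y₁ = y₃⟩`. -/
def tildeRels : Set (FreeGroup TildeGen) :=
  { FreeGroup.of TildeGen.y1 ^ 2,
    FreeGroup.of TildeGen.y2 ^ 2,
    FreeGroup.of TildeGen.y3 ^ 4,
    FreeGroup.of TildeGen.y2 * FreeGroup.of TildeGen.y3 *
      (FreeGroup.of TildeGen.y3 * FreeGroup.of TildeGen.y2)⁻¹,
    (FreeGroup.of TildeGen.y1)⁻¹ * FreeGroup.of TildeGen.y2 * FreeGroup.of TildeGen.y1 *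
      (FreeGroup.of TildeGen.y2 * FreeGroup.of TildeGen.y3 ^ 2)⁻¹,
    (FreeGroup.of TildeGen.y1)⁻¹ * FreeGroup.of TildeGen.y3 * FreeGroup.of TildeGen.y1 *
      (FreeGroup.of TildeGen.y3)⁻¹ }

/-- The group `G̃ = (ℤ/4ℤ × ℤ/2ℤ) ⋊ ℤ/2ℤ` of order 16, given by the presentation
`⟨y₁, y₂, y₃ : y₁² = y₂² = y₃⁴ = 1, y₂y₃ = y₃y₂, y₁⁻¹y₂y₁ = y₂y₃², y₁⁻¹y₃y₁ = y₃⟩`. -/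
def GTilde : Type := PresentedGroup tildeRels

noncomputable instance : Group GTilde := by unfold GTilde; infer_instance

/-!
Think of `g₃` as `-1`: every element of `Q₈` is `p` or `p g₃` with `p ∈ {1, g₁, g₂, g₁g₂}`, and
`g₃` is central of order two, so every element other than `1` and `g₃` squares to `g₃`. Hence a
homomorphism out of `Q₈` is injective as soon as it does not kill `g₃`. In `G̃` the elements
`y₂y₃`, `y₂y₁`, `y₃²` satisfy the relations of `Q₈`, and `y₃² ≠ 1` because `G̃` maps to the
Pauli group in `GL₂(𝔽₅)`, where `y₃` becomes the scalar `2` and `2² = -1`.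
-/

open PresentedGroup

theorem PresentedGroup.commute_of_forall_commute_of {α : Type*} {rels : Set (FreeGroup α)}
    {z : PresentedGroup rels} (h : ∀ a, Commute z (of a)) (q : PresentedGroup rels) :
    Commute z q := by
  have : (MulAut.conj z).toMonoidHom = MonoidHom.id _ :=
    PresentedGroup.ext fun a => by simp [(h a).eq]
  simpa [Commute, SemiconjBy, mul_inv_eq_iff_eq_mul] using DFunLike.congr_fun this q

namespace Q8

open scoped Pointwise

abbrev g₁ : Q8 := of QuatGen.g1
abbrev g₂ : Q8 := of QuatGen.g2
abbrev g₃ : Q8 := of QuatGen.g3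

theorem g₁_sq : g₁ ^ 2 = g₃ := mk_eq_mk_of_mul_inv_mem (by simp [quatRels])
theorem g₂_sq : g₂ ^ 2 = g₃ := mk_eq_mk_of_mul_inv_mem (by simp [quatRels])
theorem g₃_sq : g₃ ^ 2 = 1 := one_of_mem (by simp [quatRels])
theorem inv_g₁_mul_g₂_mul_g₁ : g₁⁻¹ * g₂ * g₁ = g₂ * g₃ :=
  mk_eq_mk_of_mul_inv_mem (by simp [quatRels])

theorem commute_g₃ (q : Q8) : Commute g₃ q := by
  refine PresentedGroup.commute_of_forall_commute_of (fun a => ?_) q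
  cases a
  · exact g₁_sq ▸ (Commute.refl g₁).pow_left 2
  · exact g₂_sq ▸ (Commute.refl g₂).pow_left 2
  · exact Commute.refl g₃

theorem g₂_mul_g₁ : g₂ * g₁ = g₁ * g₂ * g₃ := by
  rw [mul_assoc, ← inv_g₁_mul_g₂_mul_g₁]; group

theorem g₁_mul_g₂_sq : (g₁ * g₂) ^ 2 = g₃ :=
  calc (g₁ * g₂) ^ 2 = g₁ * (g₂ * g₁) * g₂ := by simp only [sq, mul_assoc]
    _ = g₁ ^ 2 * g₂ ^ 2 * g₃ := by
      rw [g₂_mul_g₁]; simp only [sq, mul_assoc, (commute_g₃ g₂).eq]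
    _ = g₃ := by rw [g₁_sq, g₂_sq, ← sq, g₃_sq, one_mul]

theorem inv_g₁ : g₁⁻¹ = g₁ * g₃ := by
  rw [inv_eq_iff_mul_eq_one, ← mul_assoc, ← sq, g₁_sq, ← sq, g₃_sq]

theorem inv_g₂ : g₂⁻¹ = g₂ * g₃ := by
  rw [inv_eq_iff_mul_eq_one, ← mul_assoc, ← sq, g₂_sq, ← sq, g₃_sq]

theorem inv_g₃ : g₃⁻¹ = g₃ := by
  rw [inv_eq_iff_mul_eq_one, ← sq, g₃_sq]

def unitReps : Set Q8 := {1, g₁, g₂, g₁ * g₂}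

def signs : Set Q8 := {1, g₃}

theorem mul_mem_signs {s t : Q8} (hs : s ∈ signs) (ht : t ∈ signs) : s * t ∈ signs := by
  rcases hs with rfl | rfl <;> rcases ht with rfl | rfl <;>
    simp [signs, ← sq, g₃_sq]

theorem commute_of_mem_signs {s : Q8} (hs : s ∈ signs) (q : Q8) : Commute s q := by
  rcases hs with rfl | rfl
  exacts [Commute.one_left q, commute_g₃ q]

theorem sq_eq_one_of_mem_signs {s : Q8} (hs : s ∈ signs) : s ^ 2 = 1 := by
  rcases hs with rfl | rfl
  exacts [one_pow 2, g₃_sq]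

theorem mul_mem_unitReps_mul_signs {g q : Q8} (hg : ∀ p ∈ unitReps, g * p ∈ unitReps * signs)
    (hq : q ∈ unitReps * signs) : g * q ∈ unitReps * signs := by
  obtain ⟨p, hp, s, hs, rfl⟩ := Set.mem_mul.1 hq
  obtain ⟨p', hp', s', hs', h⟩ := Set.mem_mul.1 (hg p hp)
  exact Set.mem_mul.2
    ⟨p', hp', s' * s, mul_mem_signs hs' hs, by rw [← mul_assoc, h, mul_assoc]⟩

theorem g₁_mul_mem : ∀ p ∈ unitReps, g₁ * p ∈ unitReps * signs := by
  rintro p (rfl | rfl | rfl | rfl)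
  · exact Set.mem_mul.2 ⟨g₁, by simp [unitReps], 1, by simp [signs], rfl⟩
  · exact Set.mem_mul.2 ⟨1, by simp [unitReps], g₃, by simp [signs],
      by rw [one_mul, ← sq, g₁_sq]⟩
  · exact Set.mem_mul.2 ⟨g₁ * g₂, by simp [unitReps], 1, by simp [signs], mul_one _⟩
  · exact Set.mem_mul.2 ⟨g₂, by simp [unitReps], g₃, by simp [signs],
      by rw [← mul_assoc, ← sq, g₁_sq, (commute_g₃ _).eq]⟩

theorem g₂_mul_mem : ∀ p ∈ unitReps, g₂ * p ∈ unitReps * signs := by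
  rintro p (rfl | rfl | rfl | rfl)
  · exact Set.mem_mul.2 ⟨g₂, by simp [unitReps], 1, by simp [signs], rfl⟩
  · exact Set.mem_mul.2
      ⟨g₁ * g₂, by simp [unitReps], g₃, by simp [signs], g₂_mul_g₁.symm⟩
  · exact Set.mem_mul.2 ⟨1, by simp [unitReps], g₃, by simp [signs],
      by rw [one_mul, ← sq, g₂_sq]⟩
  · refine Set.mem_mul.2 ⟨g₁, by simp [unitReps], 1, by simp [signs], ?_⟩
    rw [← mul_assoc, g₂_mul_g₁, mul_assoc, (commute_g₃ _).eq, ← mul_assoc, mul_assoc g₁, ← sq,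
      g₂_sq, mul_assoc, ← sq, g₃_sq]

theorem g₃_mul_mem : ∀ p ∈ unitReps, g₃ * p ∈ unitReps * signs :=
  fun p hp => Set.mem_mul.2 ⟨p, hp, g₃, by simp [signs], (commute_g₃ p).eq.symm⟩

theorem mem_unitReps_mul_signs (q : Q8) : q ∈ unitReps * signs := by
  have hq : q ∈ Subgroup.closure (Set.range (of : QuatGen → Q8)) := by
    rw [closure_range_of]; trivial
  induction hq using Subgroup.closure_induction_left with
  | one => exact Set.mem_mul.2 ⟨1, by simp [unitReps], 1, by simp [signs], one_mul 1⟩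
  | mul_left g hg q _ ih =>
    obtain ⟨a, rfl⟩ := hg
    cases a
    · exact mul_mem_unitReps_mul_signs g₁_mul_mem ih
    · exact mul_mem_unitReps_mul_signs g₂_mul_mem ih
    · exact mul_mem_unitReps_mul_signs g₃_mul_mem ih
  | inv_mul_cancel g hg q _ ih =>
    obtain ⟨a, rfl⟩ := hg
    have hg₃ := mul_mem_unitReps_mul_signs g₃_mul_mem ih
    cases a
    · rw [inv_g₁, mul_assoc]; exact mul_mem_unitReps_mul_signs g₁_mul_mem hg₃
    · rw [inv_g₂, mul_assoc]; exact mul_mem_unitReps_mul_signs g₂_mul_mem hg₃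
    · rw [inv_g₃]; exact hg₃

theorem eq_one_or_eq_g₃_or_sq_eq_g₃ (q : Q8) : q = 1 ∨ q = g₃ ∨ q ^ 2 = g₃ := by
  obtain ⟨p, hp, s, hs, rfl⟩ := Set.mem_mul.1 (mem_unitReps_mul_signs q)
  by_cases hp1 : p = 1
  · subst hp1
    rcases hs with rfl | rfl <;> simp
  · right; right
    rw [(commute_of_mem_signs hs p).symm.mul_pow, sq_eq_one_of_mem_signs hs, mul_one]
    rcases hp with rfl | rfl | rfl | rfl
    exacts [absurd rfl hp1, g₁_sq, g₂_sq, g₁_mul_g₂_sq]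

theorem injective_of_map_g₃_ne_one {G : Type*} [Group G] (f : Q8 →* G) (hf : f g₃ ≠ 1) :
    Function.Injective f := by
  refine (injective_iff_map_eq_one f).2 fun q hq => ?_
  rcases eq_one_or_eq_g₃_or_sq_eq_g₃ q with h | rfl | h
  · exact h
  · exact absurd hq hf
  · exact absurd (by rw [← h, map_pow, hq, one_pow]) hf

end Q8

namespace GTilde

abbrev y₁ : GTilde := of TildeGen.y1
abbrev y₂ : GTilde := of TildeGen.y2
abbrev y₃ : GTilde := of TildeGen.y3

theorem y₁_sq : y₁ ^ 2 = 1 := one_of_mem (by simp [tildeRels])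
theorem y₂_sq : y₂ ^ 2 = 1 := one_of_mem (by simp [tildeRels])
theorem y₃_pow_four : y₃ ^ 4 = 1 := one_of_mem (by simp [tildeRels])
theorem commute_y₂_y₃ : Commute y₂ y₃ := mk_eq_mk_of_mul_inv_mem (by simp [tildeRels])
theorem inv_y₁_mul_y₂_mul_y₁ : y₁⁻¹ * y₂ * y₁ = y₂ * y₃ ^ 2 :=
  mk_eq_mk_of_mul_inv_mem (by simp [tildeRels])
theorem inv_y₁_mul_y₃_mul_y₁ : y₁⁻¹ * y₃ * y₁ = y₃ :=
  mk_eq_mk_of_mul_inv_mem (by simp [tildeRels])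

theorem commute_y₃ (g : GTilde) : Commute y₃ g := by
  refine PresentedGroup.commute_of_forall_commute_of (fun a => ?_) g
  cases a
  · calc y₃ * y₁ = y₁ * (y₁⁻¹ * y₃ * y₁) := by group
      _ = y₁ * y₃ := by rw [inv_y₁_mul_y₃_mul_y₁]
  · exact commute_y₂_y₃.symm
  · exact Commute.refl y₃

theorem y₁_mul_y₂_mul_y₁ : y₁ * y₂ * y₁ = y₂ * y₃ ^ 2 := by
  rw [← inv_y₁_mul_y₂_mul_y₁, inv_eq_of_mul_eq_one_right (by rw [← sq, y₁_sq] : y₁ * y₁ = 1)]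

theorem y₁_mul_y₂ : y₁ * y₂ = y₂ * y₁ * y₃ ^ 2 :=
  calc y₁ * y₂ = y₁ * y₂ * y₁ * y₁ := by rw [mul_assoc _ y₁, ← sq, y₁_sq, mul_one]
    _ = y₂ * y₃ ^ 2 * y₁ := by rw [y₁_mul_y₂_mul_y₁]
    _ = y₂ * y₁ * y₃ ^ 2 := by rw [mul_assoc, ((commute_y₃ y₁).pow_left 2).eq, ← mul_assoc]

theorem y₂_mul_y₃_sq : (y₂ * y₃) ^ 2 = y₃ ^ 2 := by
  rw [commute_y₂_y₃.mul_pow, y₂_sq, one_mul]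

theorem y₂_mul_y₁_sq : (y₂ * y₁) ^ 2 = y₃ ^ 2 := by
  rw [sq, mul_assoc, ← mul_assoc y₁, y₁_mul_y₂_mul_y₁, ← mul_assoc, ← sq, y₂_sq, one_mul]

theorem y₃_sq_sq : (y₃ ^ 2) ^ 2 = 1 := by
  rw [← pow_mul]; exact y₃_pow_four

theorem conj_y₂_mul_y₁_by_y₂_mul_y₃ :
    (y₂ * y₃)⁻¹ * (y₂ * y₁) * (y₂ * y₃) = y₂ * y₁ * y₃ ^ 2 :=
  calc (y₂ * y₃)⁻¹ * (y₂ * y₁) * (y₂ * y₃) = y₃⁻¹ * (y₁ * y₂ * y₃) := by group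
    _ = y₁ * y₂ := by rw [← (commute_y₃ _).eq, inv_mul_cancel_left]
    _ = y₂ * y₁ * y₃ ^ 2 := y₁_mul_y₂

def pauli : TildeGen → (Matrix (Fin 2) (Fin 2) (ZMod 5))ˣ
  | .y1 => ⟨!![1, 0; 0, -1], !![1, 0; 0, -1], by decide, by decide⟩
  | .y2 => ⟨!![0, 1; 1, 0], !![0, 1; 1, 0], by decide, by decide⟩
  | .y3 => ⟨!![2, 0; 0, 2], !![3, 0; 0, 3], by decide, by decide⟩

theorem lift_pauli_eq_one : ∀ r ∈ tildeRels, FreeGroup.lift pauli r = 1 := by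
  simp only [tildeRels, Set.mem_insert_iff, Set.mem_singleton_iff]
  rintro r (rfl | rfl | rfl | rfl | rfl | rfl) <;>
    simp only [map_mul, map_inv, map_pow, FreeGroup.lift_apply_of] <;> decide

theorem y₃_sq_ne_one : y₃ ^ 2 ≠ 1 := by
  let φ : GTilde →* (Matrix (Fin 2) (Fin 2) (ZMod 5))ˣ := toGroup lift_pauli_eq_one
  intro h
  have : φ y₃ ^ 2 = 1 := by rw [← map_pow, h, map_one]
  rw [show φ y₃ = pauli .y3 from toGroup.of lift_pauli_eq_one] at this
  exact absurd this (by decide)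

end GTilde

namespace Q8

open GTilde

noncomputable def toGTildeGen : QuatGen → GTilde
  | .g1 => y₂ * y₃
  | .g2 => y₂ * y₁
  | .g3 => y₃ ^ 2

theorem lift_toGTildeGen_eq_one : ∀ r ∈ quatRels, FreeGroup.lift toGTildeGen r = 1 := by
  simp only [quatRels, Set.mem_insert_iff, Set.mem_singleton_iff]
  rintro r (rfl | rfl | rfl | rfl) <;>
    simp only [map_mul, map_inv, map_pow, FreeGroup.lift_apply_of, toGTildeGen,
      mul_inv_eq_one]
  exacts [y₂_mul_y₃_sq, y₂_mul_y₁_sq, y₃_sq_sq, conj_y₂_mul_y₁_by_y₂_mul_y₃]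

noncomputable def toGTilde : Q8 →* GTilde := toGroup lift_toGTildeGen_eq_one

theorem injective_toGTilde : Function.Injective toGTilde :=
  injective_of_map_g₃_ne_one _ ((toGroup.of lift_toGTildeGen_eq_one).trans_ne y₃_sq_ne_one)

end Q8

/-- There exists an injective group homomorphism from the quaternion group
`Q₈ = ⟨g₁, g₂, g₃ : g₁² = g₂² = g₃, g₃² = 1, g₁⁻¹g₂g₁ = g₂g₃⟩` into the semidirect product
`G̃ = (ℤ/4ℤ × ℤ/2ℤ) ⋊ ℤ/2ℤ
   = ⟨y₁, y₂, y₃ : y₁² = y₂² = y₃⁴ = 1, y₂y₃ = y₃y₂, y₁⁻¹y₂y₁ = y₂y₃², y₁⁻¹y₃y₁ = y₃⟩`,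
given on generators by `g₁ ↦ y₂y₃`, `g₂ ↦ y₂y₁`, `g₃ ↦ y₃²`. -/
theorem exists_injective_hom_Q8_to_GTilde :
    ∃ f : Q8 →* GTilde, Function.Injective f ∧
      f (PresentedGroup.of QuatGen.g1) =
        PresentedGroup.of TildeGen.y2 * PresentedGroup.of TildeGen.y3 ∧
      f (PresentedGroup.of QuatGen.g2) =
        PresentedGroup.of TildeGen.y2 * PresentedGroup.of TildeGen.y1 ∧
      f (PresentedGroup.of QuatGen.g3) = PresentedGroup.of TildeGen.y3 ^ 2 :=
  ⟨Q8.toGTilde, Q8.injective_toGTilde, toGroup.of _, toGroup.of _, toGroup.of _⟩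
end
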